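/- arXiv:1605.06396 — 2 statements merged into one kernel-verified Lean document; each statement's English description precedes it below -/
import Mathlib

section
/- For every codebook C = {x^n(m)}_{m=1}^{M} with M = 2^{nR} and every ε > 0, the total variation distance between the induced distribution and the product output distribution satisfies ‖P_{Y^n|C} − Q_{Y^n}‖_TV ≤ Σ_{y^n} Q_{Y^n}(y^n) [D_{C,1}(y^n) − 1]_+ + Σ_{y^n} P_{C,2}(y^n), where [z]_+ = max{z,0}. -/
open Finset Real
open scoped BigOperators Classical

noncomputable section SoftCovering

/-- `p` is a probability mass function on the finite type `α`. -/
def IsPMF {α : Type*} [Fintype α] (p : α → ℝ) : Prop :=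
  (∀ a, 0 ≤ p a) ∧ ∑ a, p a = 1

variable {𝒳 𝒴 : Type*} [Fintype 𝒳] [Fintype 𝒴]

/-- The output distribution `Q_Y` on `𝒴` induced by the input distribution `Q_X`
and the channel `Q_{Y|X}`. -/
def outDist (QX : 𝒳 → ℝ) (QYX : 𝒳 → 𝒴 → ℝ) (y : 𝒴) : ℝ := ∑ x, QX x * QYX x y

/-- The `n`-fold i.i.d. product of a distribution `p`. -/
def prodDist {α : Type*} [Fintype α] (p : α → ℝ) (n : ℕ) (xs : Fin n → α) : ℝ :=
  ∏ i, p (xs i)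

/-- The `n`-fold memoryless channel: `Q_{Y^n|X^n = xs}(ys)`. -/
def chanProd (QYX : 𝒳 → 𝒴 → ℝ) (n : ℕ) (xs : Fin n → 𝒳) (ys : Fin n → 𝒴) : ℝ :=
  ∏ i, QYX (xs i) (ys i)

/-- The information density `ı_{X;Y}(x;y) = log₂ (Q_{Y|X}(y|x) / Q_Y(y))`, in bits. -/
def infoDensity (QX : 𝒳 → ℝ) (QYX : 𝒳 → 𝒴 → ℝ) (x : 𝒳) (y : 𝒴) : ℝ :=
  Real.logb 2 (QYX x y / outDist QX QYX y)

/-- The mutual information `I(X;Y)` of `(X,Y) ~ Q_X Q_{Y|X}`, in bits. -/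
def mutualInfo (QX : 𝒳 → ℝ) (QYX : 𝒳 → 𝒴 → ℝ) : ℝ :=
  ∑ x, ∑ y, QX x * QYX x y * infoDensity QX QYX x y

/-- The variance `V` of the information density under `(X,Y) ~ Q_X Q_{Y|X}`. -/
def infoVar (QX : 𝒳 → ℝ) (QYX : 𝒳 → 𝒴 → ℝ) : ℝ :=
  ∑ x, ∑ y, QX x * QYX x y * (infoDensity QX QYX x y - mutualInfo QX QYX) ^ 2

/-- The centered third absolute moment `ρ` of the information density. -/
def infoThird (QX : 𝒳 → ℝ) (QYX : 𝒳 → 𝒴 → ℝ) : ℝ :=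
  ∑ x, ∑ y, QX x * QYX x y * |infoDensity QX QYX x y - mutualInfo QX QYX| ^ 3

/-- The Rényi divergence of order `a` between `Q_{X,Y} = Q_X Q_{Y|X}` and the product
of its marginals `Q_X Q_Y`, in bits. -/
def renyiDiv (QX : 𝒳 → ℝ) (QYX : 𝒳 → 𝒴 → ℝ) (a : ℝ) : ℝ :=
  (a - 1)⁻¹ * Real.logb 2 (∑ x, ∑ y,
    (QX x * QYX x y) ^ a * (QX x * outDist QX QYX y) ^ (1 - a))

/-- Membership in the jointly typical set
`𝒜_ε = {(x^n,y^n) : (1/n) log₂ (Q_{Y^n|X^n=x^n}(y^n)/Q_{Y^n}(y^n)) ≤ I(X;Y) + ε}`. -/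
def JTypical (QX : 𝒳 → ℝ) (QYX : 𝒳 → 𝒴 → ℝ) (n : ℕ) (ε : ℝ)
    (xs : Fin n → 𝒳) (ys : Fin n → 𝒴) : Prop :=
  (n : ℝ)⁻¹ * Real.logb 2 (chanProd QYX n xs ys / prodDist (outDist QX QYX) n ys)
    ≤ mutualInfo QX QYX + ε

/-- The probability that `(X^n, Y^n) ~ Q_{X^n} Q_{Y^n|X^n}` is outside `𝒜_ε`. -/
def atypProb (QX : 𝒳 → ℝ) (QYX : 𝒳 → 𝒴 → ℝ) (n : ℕ) (ε : ℝ) : ℝ :=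
  ∑ xs : Fin n → 𝒳, ∑ ys : Fin n → 𝒴,
    if ¬ JTypical QX QYX n ε xs ys then prodDist QX n xs * chanProd QYX n xs ys else 0

/-- The induced output distribution `P_{Y^n|C} = 2^{-nR} ∑_m Q_{Y^n|X^n = x^n(m)}`
of a codebook `C` of size `M = 2^{nR}` (so `2^{-nR} = 1/M`). -/
def inducedDist (QYX : 𝒳 → 𝒴 → ℝ) (n M : ℕ) (C : Fin M → Fin n → 𝒳)
    (ys : Fin n → 𝒴) : ℝ :=
  (M : ℝ)⁻¹ * ∑ m, chanProd QYX n (C m) ys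

/-- The typical part `P_{C,1}(y^n) = 2^{-nR} ∑_m Q_{Y^n|X^n=x^n(m)}(y^n) 1{(x^n(m),y^n) ∈ 𝒜_ε}`. -/
def Ptyp (QX : 𝒳 → ℝ) (QYX : 𝒳 → 𝒴 → ℝ) (n M : ℕ) (ε : ℝ)
    (C : Fin M → Fin n → 𝒳) (ys : Fin n → 𝒴) : ℝ :=
  (M : ℝ)⁻¹ * ∑ m, if JTypical QX QYX n ε (C m) ys then chanProd QYX n (C m) ys else 0

/-- The atypical part `P_{C,2}(y^n) = 2^{-nR} ∑_m Q_{Y^n|X^n=x^n(m)}(y^n) 1{(x^n(m),y^n) ∉ 𝒜_ε}`. -/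
def Patyp (QX : 𝒳 → ℝ) (QYX : 𝒳 → 𝒴 → ℝ) (n M : ℕ) (ε : ℝ)
    (C : Fin M → Fin n → 𝒳) (ys : Fin n → 𝒴) : ℝ :=
  (M : ℝ)⁻¹ * ∑ m, if ¬ JTypical QX QYX n ε (C m) ys then chanProd QYX n (C m) ys else 0

/-- The density `D_{C,1}(y^n) = P_{C,1}(y^n)/Q_{Y^n}(y^n)
= 2^{-nR} ∑_m (Q_{Y^n|X^n=x^n(m)}(y^n)/Q_{Y^n}(y^n)) 1{(x^n(m),y^n) ∈ 𝒜_ε}`. -/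
def Dtyp (QX : 𝒳 → ℝ) (QYX : 𝒳 → 𝒴 → ℝ) (n M : ℕ) (ε : ℝ)
    (C : Fin M → Fin n → 𝒳) (ys : Fin n → 𝒴) : ℝ :=
  (M : ℝ)⁻¹ * ∑ m, if JTypical QX QYX n ε (C m) ys then
    chanProd QYX n (C m) ys / prodDist (outDist QX QYX) n ys else 0

/-- Total variation distance `(1/2) ∑_y |P y - Q y|` on a finite type. -/
def tvDist {β : Type*} [Fintype β] (P Q : β → ℝ) : ℝ := (1 / 2) * ∑ y, |P y - Q y|

/-- Probability of an event `E` over the random codebook of `M` codewords drawn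
i.i.d. from `Q_{X^n}`. -/
def cbProb (QX : 𝒳 → ℝ) (n M : ℕ) (E : (Fin M → Fin n → 𝒳) → Prop) : ℝ :=
  ∑ C : Fin M → Fin n → 𝒳, if E C then ∏ m, prodDist QX n (C m) else 0

/-- `𝒬(x)`: one minus the standard normal cumulative distribution function. -/
def gaussQ (x : ℝ) : ℝ :=
  (Real.sqrt (2 * Real.pi))⁻¹ * ∫ t in Set.Ioi x, Real.exp (-(t ^ 2 / 2))

/-- `𝒬⁻¹`, the inverse of `𝒬`. -/
def gaussQInv : ℝ → ℝ := Function.invFun gaussQ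

/-! Both distributions have total mass one, so the total variation distance is the positive
mass of `P_{Y^n|C} − Q_{Y^n}`. Splitting `P_{Y^n|C} = P_{C,1} + P_{C,2}` and bounding the positive
part of the sum by the positive part of `P_{C,1} − Q_{Y^n}` plus `P_{C,2} ≥ 0` gives the claim,
because `P_{C,1} = Q_{Y^n} D_{C,1}` pointwise. -/

lemma tvDist_eq_sum_max_sub_zero {β : Type*} [Fintype β] {P Q : β → ℝ}
    (h : ∑ y, P y = ∑ y, Q y) : tvDist P Q = ∑ y, max (P y - Q y) 0 := by
  have habs : ∀ a : ℝ, |a| = 2 * max a 0 - a := fun a => by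
    rcases le_total a 0 with ha | ha
    · rw [abs_of_nonpos ha, max_eq_right ha]; ring
    · rw [abs_of_nonneg ha, max_eq_left ha]; ring
  simp only [tvDist, habs, sum_sub_distrib, ← mul_sum, h]
  ring

lemma max_add_sub_zero_le {a b c : ℝ} (hb : 0 ≤ b) : max (a + b - c) 0 ≤ max (a - c) 0 + b :=
  max_le (by linarith [le_max_left (a - c) 0]) (by positivity)

lemma isPMF_pi_prod {ι α : Type*} [Fintype ι] [DecidableEq ι] [Fintype α] {p : ι → α → ℝ}
    (hp : ∀ i, IsPMF (p i)) : IsPMF fun xs : ι → α => ∏ i, p i (xs i) :=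
  ⟨fun _ => prod_nonneg fun i _ => (hp i).1 _, by
    rw [← Fintype.prod_sum, prod_congr rfl fun i _ => (hp i).2, prod_const_one]⟩

lemma IsPMF.prodDist {α : Type*} [Fintype α] {p : α → ℝ} (hp : IsPMF p) (n : ℕ) :
    IsPMF (prodDist p n) :=
  isPMF_pi_prod fun _ => hp

lemma IsPMF.chanProd {α β : Type*} [Fintype β] {W : α → β → ℝ} (hW : ∀ a, IsPMF (W a))
    (n : ℕ) (xs : Fin n → α) : IsPMF (chanProd W n xs) :=
  isPMF_pi_prod fun i => hW (xs i)

lemma IsPMF.outDist {QX : 𝒳 → ℝ} {QYX : 𝒳 → 𝒴 → ℝ} (hQX : IsPMF QX)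
    (hQYX : ∀ x, IsPMF (QYX x)) : IsPMF (outDist QX QYX) := by
  refine ⟨fun y => sum_nonneg fun x _ => mul_nonneg (hQX.1 x) ((hQYX x).1 y), ?_⟩
  simp only [_root_.outDist]
  rw [sum_comm]
  simp only [← mul_sum, (hQYX _).2, mul_one, hQX.2]

lemma IsPMF.inducedDist {α β : Type*} [Fintype β] {W : α → β → ℝ} (hW : ∀ a, IsPMF (W a))
    {n M : ℕ} (hM : 0 < M) (C : Fin M → Fin n → α) : IsPMF (inducedDist W n M C) := by
  refine ⟨fun ys => mul_nonneg (by positivity)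
    (sum_nonneg fun m _ => (IsPMF.chanProd hW n (C m)).1 ys), ?_⟩
  simp only [_root_.inducedDist]
  rw [← mul_sum, sum_comm]
  simp only [(IsPMF.chanProd hW n _).2, sum_const, card_univ, Fintype.card_fin, nsmul_eq_mul,
    mul_one]
  exact inv_mul_cancel₀ (Nat.cast_ne_zero.mpr hM.ne')

section Codebook

variable {QX : 𝒳 → ℝ} {QYX : 𝒳 → 𝒴 → ℝ} {n M : ℕ} {ε : ℝ} {C : Fin M → Fin n → 𝒳}

lemma inducedDist_eq_Ptyp_add_Patyp (ys : Fin n → 𝒴) :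
    inducedDist QYX n M C ys = Ptyp QX QYX n M ε C ys + Patyp QX QYX n M ε C ys := by
  simp only [inducedDist, Ptyp, Patyp, ← mul_add, ← sum_add_distrib]
  congr 1
  refine sum_congr rfl fun m _ => ?_
  by_cases h : JTypical QX QYX n ε (C m) ys <;> simp [h]

lemma Patyp_nonneg (hQYX : ∀ x y, 0 ≤ QYX x y) (ys : Fin n → 𝒴) :
    0 ≤ Patyp QX QYX n M ε C ys :=
  mul_nonneg (by positivity) <| sum_nonneg fun _ _ =>
    ite_nonneg (prod_nonneg fun _ _ => hQYX _ _) le_rfl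

/-- This is what makes `P_{C,1} = Q_{Y^n} D_{C,1}` hold despite `c / 0 = 0`. -/
lemma chanProd_eq_zero_of_prodDist_outDist_eq_zero (hQX : ∀ x, 0 ≤ QX x)
    (hQYX : ∀ x y, 0 ≤ QYX x y) {xs : Fin n → 𝒳} (hxs : ∀ i, 0 < QX (xs i)) {ys : Fin n → 𝒴}
    (h : prodDist (outDist QX QYX) n ys = 0) : chanProd QYX n xs ys = 0 := by
  obtain ⟨i, -, hi⟩ := prod_eq_zero_iff.mp h
  have hle : QX (xs i) * QYX (xs i) (ys i) ≤ 0 :=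
    hi ▸ single_le_sum (fun x _ => mul_nonneg (hQX x) (hQYX x (ys i))) (mem_univ (xs i))
  refine prod_eq_zero (mem_univ i) (le_antisymm ?_ (hQYX _ _))
  exact nonpos_of_mul_nonpos_right (by linarith) (hxs i)

lemma prodDist_outDist_mul_Dtyp (hQX : ∀ x, 0 ≤ QX x) (hQYX : ∀ x y, 0 ≤ QYX x y)
    (hC : ∀ m i, 0 < QX (C m i)) (ys : Fin n → 𝒴) :
    prodDist (outDist QX QYX) n ys * Dtyp QX QYX n M ε C ys = Ptyp QX QYX n M ε C ys := by
  simp only [Dtyp, Ptyp]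
  rw [mul_left_comm, mul_sum]
  congr 1
  refine sum_congr rfl fun m _ => ?_
  split_ifs
  · by_cases hQ : prodDist (outDist QX QYX) n ys = 0
    · rw [hQ, zero_mul, chanProd_eq_zero_of_prodDist_outDist_eq_zero hQX hQYX (hC m) hQ]
    · exact mul_div_cancel₀ _ hQ
  · exact mul_zero _

end Codebook

theorem tv_le_typical_plus_atypical_general
    {𝒳 𝒴 : Type*} [Fintype 𝒳] [Fintype 𝒴]
    (QX : 𝒳 → ℝ) (QYX : 𝒳 → 𝒴 → ℝ) (hQX : IsPMF QX) (hQYX : ∀ x, IsPMF (QYX x))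
    (n M : ℕ) (hM : 0 < M) (ε : ℝ)
    (C : Fin M → Fin n → 𝒳) (hC : ∀ m i, 0 < QX (C m i)) :
    tvDist (inducedDist QYX n M C) (prodDist (outDist QX QYX) n)
      ≤ (∑ ys, prodDist (outDist QX QYX) n ys * max (Dtyp QX QYX n M ε C ys - 1) 0)
        + ∑ ys, Patyp QX QYX n M ε C ys := by
  have hQYX0 : ∀ x y, 0 ≤ QYX x y := fun x => (hQYX x).1
  have hQ : IsPMF (prodDist (outDist QX QYX) n) := (hQX.outDist hQYX).prodDist n
  have hP : IsPMF (inducedDist QYX n M C) := IsPMF.inducedDist hQYX hM C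
  rw [tvDist_eq_sum_max_sub_zero (hP.2.trans hQ.2.symm), ← sum_add_distrib]
  refine sum_le_sum fun ys _ => ?_
  rw [mul_max_of_nonneg _ _ (hQ.1 ys), mul_sub_one, mul_zero,
    prodDist_outDist_mul_Dtyp hQX.1 hQYX0 hC, inducedDist_eq_Ptyp_add_Patyp]
  exact max_add_sub_zero_le (Patyp_nonneg hQYX0 ys)

/-- **Splitting the total variation (Eq. (15) of the paper).**
For every codebook `C` of size `M = 2^{nR}` (with codewords in the support of `Q_X`)
and every `ε > 0`,
`‖P_{Y^n|C} − Q_{Y^n}‖_TV ≤ ∑_{y^n} Q_{Y^n}(y^n)[D_{C,1}(y^n) − 1]₊ + ∑_{y^n} P_{C,2}(y^n)`. -/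
theorem tv_le_typical_plus_atypical
    {𝒳 𝒴 : Type*} [Fintype 𝒳] [Fintype 𝒴]
    (QX : 𝒳 → ℝ) (QYX : 𝒳 → 𝒴 → ℝ) (hQX : IsPMF QX) (hQYX : ∀ x, IsPMF (QYX x))
    (n M : ℕ) (hM : 0 < M) (ε : ℝ) (hε : 0 < ε)
    (C : Fin M → Fin n → 𝒳) (hC : ∀ m i, 0 < QX (C m i)) :
    tvDist (inducedDist QYX n M C) (prodDist (outDist QX QYX) n)
      ≤ (∑ ys, prodDist (outDist QX QYX) n ys * max (Dtyp QX QYX n M ε C ys - 1) 0)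
        + ∑ ys, Patyp QX QYX n M ε C ys :=
  tv_le_typical_plus_atypical_general QX QYX hQX hQYX n M hM ε C hC
end SoftCovering
end

section
/- For any ε > 0 and any α > 1, the probability under (X^n, Y^n) ~ Q_{X^n} Q_{Y^n|X^n} that (X^n, Y^n) lies outside the jointly typical set 𝒜_ε is at most 2^{−βn}, where β = (α − 1)(I(X;Y) + ε − d_α(Q_{X,Y}, Q_X Q_Y)). -/
open Finset Real
open scoped BigOperators Classical

noncomputable section SoftCovering

variable {𝒳 𝒴 : Type*} [Fintype 𝒳] [Fintype 𝒴]

/-! Chernoff's bound with tilting exponent `a - 1`: outside `𝒜_ε` the likelihood ratio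
`r = Q_{Y^n|X^n}/Q_{Y^n}` exceeds `2^{n(I+ε)}`, so the indicator of the complement of `𝒜_ε`
is at most `(r · 2^{-n(I+ε)})^{a-1}`. The expectation of `r^{a-1}` under `Q_{X^n}Q_{Y^n|X^n}`
is a product over the `n` letters, and the one-letter factor is `2^{(a-1) d_a}`. -/

namespace Real

theorem le_rpow_logb_self {b x : ℝ} (hb : 1 < b) (hx : 0 ≤ x) : x ≤ b ^ logb b x := by
  rcases hx.eq_or_lt with rfl | hx
  · simp
  · exact (rpow_logb (by linarith) hb.ne' hx).ge

theorem one_le_rpow_mul_two_rpow_of_le_logb {r s t : ℝ} (hr : 0 < r) (hs : 0 ≤ s)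
    (ht : t ≤ logb 2 r) : 1 ≤ r ^ s * 2 ^ (-(s * t)) := by
  rw [← rpow_logb two_pos one_lt_two.ne' hr, ← rpow_mul zero_le_two, ← rpow_add two_pos]
  exact one_le_rpow one_le_two (by nlinarith)

theorem mul_mul_div_rpow_sub_one {p w q a : ℝ} (hp : 0 ≤ p) (hw : 0 ≤ w) (hq : 0 ≤ q)
    (ha : 1 < a) : p * w * (w / q) ^ (a - 1) = (p * w) ^ a * (p * q) ^ (1 - a) := by
  have ha0 : a ≠ 0 := by linarith
  rcases hp.eq_or_lt with rfl | hp
  · simp [zero_rpow ha0]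
  rcases hw.eq_or_lt with rfl | hw
  · simp [zero_rpow ha0]
  rcases hq.eq_or_lt with rfl | hq
  · simp [zero_rpow (show a - 1 ≠ 0 by linarith), zero_rpow (show 1 - a ≠ 0 by linarith)]
  obtain ⟨s, rfl⟩ : ∃ s, a = s + 1 := ⟨a - 1, by ring⟩
  rw [show s + 1 - 1 = s by ring, show 1 - (s + 1) = -s by ring, div_rpow hw.le hq.le,
    mul_rpow hp.le hw.le, mul_rpow hp.le hq.le, rpow_add_one hp.ne', rpow_add_one hw.ne',
    rpow_neg hp.le, rpow_neg hq.le]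
  field_simp

end Real

theorem Fintype.sum_sum_prod_eq_pow {α β R : Type*} [Fintype α] [Fintype β] [CommSemiring R]
    (f : α → β → R) (n : ℕ) :
    ∑ xs : Fin n → α, ∑ ys : Fin n → β, ∏ i, f (xs i) (ys i) = (∑ x, ∑ y, f x y) ^ n := by
  rw [← Fintype.sum_prod_type', ← Fintype.sum_prod_type', Fintype.sum_pow]
  exact Fintype.sum_equiv (Equiv.arrowProdEquivProdArrow (Fin n) (fun _ => α) (fun _ => β)).symm
    _ _ fun _ => rfl

section Chernoff

variable (QX : 𝒳 → ℝ) (QYX : 𝒳 → 𝒴 → ℝ)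

omit [Fintype 𝒴] in
theorem outDist_nonneg (hQX : ∀ x, 0 ≤ QX x) (hQYX : ∀ x y, 0 ≤ QYX x y) (y : 𝒴) :
    0 ≤ outDist QX QYX y :=
  sum_nonneg fun x _ => mul_nonneg (hQX x) (hQYX x y)

omit [Fintype 𝒴] in
theorem mul_le_outDist (hQX : ∀ x, 0 ≤ QX x) (hQYX : ∀ x y, 0 ≤ QYX x y) (x : 𝒳) (y : 𝒴) :
    QX x * QYX x y ≤ outDist QX QYX y :=
  single_le_sum (fun x' _ => mul_nonneg (hQX x') (hQYX x' y)) (mem_univ x)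

theorem prodDist_mul_chanProd_le (hQX : ∀ x, 0 ≤ QX x) (hQYX : ∀ x y, 0 ≤ QYX x y) (n : ℕ)
    (xs : Fin n → 𝒳) (ys : Fin n → 𝒴) :
    prodDist QX n xs * chanProd QYX n xs ys ≤ prodDist (outDist QX QYX) n ys := by
  rw [prodDist, chanProd, ← prod_mul_distrib]
  exact prod_le_prod (fun i _ => mul_nonneg (hQX _) (hQYX _ _))
    fun i _ => mul_le_outDist QX QYX hQX hQYX _ _

theorem prodDist_mul_chanProd_mul_rpow {q : 𝒴 → ℝ} (hQYX : ∀ x y, 0 ≤ QYX x y)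
    (hq : ∀ y, 0 ≤ q y) (n : ℕ) (s : ℝ) (xs : Fin n → 𝒳) (ys : Fin n → 𝒴) :
    prodDist QX n xs * chanProd QYX n xs ys * (chanProd QYX n xs ys / prodDist q n ys) ^ s
      = ∏ i, QX (xs i) * QYX (xs i) (ys i) * (QYX (xs i) (ys i) / q (ys i)) ^ s := by
  rw [prodDist, chanProd, prodDist, ← prod_div_distrib,
    ← finsetProd_rpow _ _ fun i _ => div_nonneg (hQYX _ _) (hq _), ← prod_mul_distrib,
    ← prod_mul_distrib]

theorem sum_sum_prodDist_mul_chanProd_mul_rpow (hQX : ∀ x, 0 ≤ QX x)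
    (hQYX : ∀ x y, 0 ≤ QYX x y) (n : ℕ) (s : ℝ) :
    ∑ xs : Fin n → 𝒳, ∑ ys : Fin n → 𝒴, prodDist QX n xs * chanProd QYX n xs ys
        * (chanProd QYX n xs ys / prodDist (outDist QX QYX) n ys) ^ s
      = (∑ x, ∑ y, QX x * QYX x y * (QYX x y / outDist QX QYX y) ^ s) ^ n := by
  simp_rw [prodDist_mul_chanProd_mul_rpow QX QYX hQYX (outDist_nonneg QX QYX hQX hQYX)]
  exact Fintype.sum_sum_prod_eq_pow
    (fun x y => QX x * QYX x y * (QYX x y / outDist QX QYX y) ^ s) n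

theorem sum_mul_div_outDist_rpow_le (hQX : ∀ x, 0 ≤ QX x) (hQYX : ∀ x y, 0 ≤ QYX x y)
    {a : ℝ} (ha : 1 < a) :
    ∑ x, ∑ y, QX x * QYX x y * (QYX x y / outDist QX QYX y) ^ (a - 1)
      ≤ 2 ^ ((a - 1) * renyiDiv QX QYX a) := by
  rw [renyiDiv, mul_inv_cancel_left₀ (by linarith)]
  simp_rw [Real.mul_mul_div_rpow_sub_one (hQX _) (hQYX _ _)
    (outDist_nonneg QX QYX hQX hQYX _) ha]
  refine Real.le_rpow_logb_self one_lt_two (sum_nonneg fun x _ => sum_nonneg fun y _ => ?_)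
  exact mul_nonneg (rpow_nonneg (mul_nonneg (hQX x) (hQYX x y)) _)
    (rpow_nonneg (mul_nonneg (hQX x) (outDist_nonneg QX QYX hQX hQYX y)) _)

theorem mul_le_logb_of_not_JTypical {n : ℕ} {ε : ℝ} {xs : Fin n → 𝒳} {ys : Fin n → 𝒴}
    (h : ¬ JTypical QX QYX n ε xs ys) :
    (mutualInfo QX QYX + ε) * n
      ≤ logb 2 (chanProd QYX n xs ys / prodDist (outDist QX QYX) n ys) := by
  rcases n.eq_zero_or_pos with rfl | hn
  · simp [chanProd, prodDist]
  · rw [JTypical, not_le, inv_mul_eq_div, lt_div_iff₀ (by exact_mod_cast hn)] at h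
    exact h.le

theorem atypical_term_le (hQX : ∀ x, 0 ≤ QX x) (hQYX : ∀ x y, 0 ≤ QYX x y) {a : ℝ}
    (ha : 1 < a) (n : ℕ) (ε : ℝ) (xs : Fin n → 𝒳) (ys : Fin n → 𝒴) :
    (if ¬ JTypical QX QYX n ε xs ys then prodDist QX n xs * chanProd QYX n xs ys else 0)
      ≤ prodDist QX n xs * chanProd QYX n xs ys
          * (chanProd QYX n xs ys / prodDist (outDist QX QYX) n ys) ^ (a - 1)
          * 2 ^ (-((a - 1) * ((mutualInfo QX QYX + ε) * n))) := by
  set w := prodDist QX n xs * chanProd QYX n xs ys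
  set r := chanProd QYX n xs ys / prodDist (outDist QX QYX) n ys
  have hw : 0 ≤ w := mul_nonneg (prod_nonneg fun i _ => hQX _) (prod_nonneg fun i _ => hQYX _ _)
  have hr : 0 ≤ r := div_nonneg (prod_nonneg fun i _ => hQYX _ _)
    (prod_nonneg fun i _ => outDist_nonneg QX QYX hQX hQYX _)
  by_cases h : JTypical QX QYX n ε xs ys
  · rw [if_neg (not_not_intro h)]
    exact mul_nonneg (mul_nonneg hw (rpow_nonneg hr _)) (rpow_nonneg zero_le_two _)
  · rw [if_pos h]
    rcases hw.eq_or_lt with hw0 | hw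
    · simp [← hw0]
    have hchan : 0 < chanProd QYX n xs ys :=
      pos_of_mul_pos_right hw (prod_nonneg fun i _ => hQX _)
    have hr_pos : 0 < r :=
      div_pos hchan (hw.trans_le (prodDist_mul_chanProd_le QX QYX hQX hQYX n xs ys))
    have hchernoff := Real.one_le_rpow_mul_two_rpow_of_le_logb hr_pos (by linarith : 0 ≤ a - 1)
      (mul_le_logb_of_not_JTypical QX QYX h)
    rw [mul_assoc]
    exact le_mul_of_one_le_right hw.le hchernoff

end Chernoff

theorem atypical_prob_le_general
    {𝒳 𝒴 : Type*} [Fintype 𝒳] [Fintype 𝒴]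
    (QX : 𝒳 → ℝ) (QYX : 𝒳 → 𝒴 → ℝ) (hQX : IsPMF QX) (hQYX : ∀ x, IsPMF (QYX x))
    (n : ℕ) (ε : ℝ) (a : ℝ) (ha : 1 < a)
    (β : ℝ) (hβ : β = (a - 1) * (mutualInfo QX QYX + ε - renyiDiv QX QYX a)) :
    atypProb QX QYX n ε ≤ 2 ^ (-(β * n)) := by
  have hQX₀ : ∀ x, 0 ≤ QX x := hQX.1
  have hQYX₀ : ∀ x y, 0 ≤ QYX x y := fun x => (hQYX x).1
  have hsum_nonneg : 0 ≤ ∑ x, ∑ y, QX x * QYX x y * (QYX x y / outDist QX QYX y) ^ (a - 1) :=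
    sum_nonneg fun x _ => sum_nonneg fun y _ => mul_nonneg (mul_nonneg (hQX₀ x) (hQYX₀ x y))
      (rpow_nonneg (div_nonneg (hQYX₀ x y) (outDist_nonneg QX QYX hQX₀ hQYX₀ y)) _)
  calc atypProb QX QYX n ε
      ≤ ∑ xs : Fin n → 𝒳, ∑ ys : Fin n → 𝒴, prodDist QX n xs * chanProd QYX n xs ys
          * (chanProd QYX n xs ys / prodDist (outDist QX QYX) n ys) ^ (a - 1)
          * 2 ^ (-((a - 1) * ((mutualInfo QX QYX + ε) * n))) :=
        sum_le_sum fun xs _ => sum_le_sum fun ys _ =>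
          atypical_term_le QX QYX hQX₀ hQYX₀ ha n ε xs ys
    _ = (∑ x, ∑ y, QX x * QYX x y * (QYX x y / outDist QX QYX y) ^ (a - 1)) ^ n
          * 2 ^ (-((a - 1) * ((mutualInfo QX QYX + ε) * n))) := by
        simp_rw [← sum_mul, sum_sum_prodDist_mul_chanProd_mul_rpow QX QYX hQX₀ hQYX₀]
    _ ≤ (2 ^ ((a - 1) * renyiDiv QX QYX a)) ^ n
          * 2 ^ (-((a - 1) * ((mutualInfo QX QYX + ε) * n))) := by
        gcongr
        exact sum_mul_div_outDist_rpow_le QX QYX hQX₀ hQYX₀ ha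
    _ = 2 ^ (-(β * n)) := by
        rw [← rpow_natCast, ← rpow_mul zero_le_two, ← rpow_add two_pos, hβ]
        ring_nf

/-- **Chernoff bound on the probability of atypicality (Eq. (19)-(20)).**
For any `ε > 0` and `α > 1`, the probability under `(X^n,Y^n) ~ Q_{X^n} Q_{Y^n|X^n}`
of falling outside `𝒜_ε` is at most `2^{−βn}` with
`β = (α − 1)(I(X;Y) + ε − d_α(Q_{X,Y}, Q_X Q_Y))`. -/
theorem atypical_prob_le
    {𝒳 𝒴 : Type*} [Fintype 𝒳] [Fintype 𝒴]
    (QX : 𝒳 → ℝ) (QYX : 𝒳 → 𝒴 → ℝ) (hQX : IsPMF QX) (hQYX : ∀ x, IsPMF (QYX x))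
    (n : ℕ) (ε : ℝ) (hε : 0 < ε) (a : ℝ) (ha : 1 < a)
    (β : ℝ) (hβ : β = (a - 1) * (mutualInfo QX QYX + ε - renyiDiv QX QYX a)) :
    atypProb QX QYX n ε ≤ 2 ^ (-(β * n)) :=
  atypical_prob_le_general QX QYX hQX hQYX n ε a ha β hβ
end SoftCovering
end
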